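/- Let γ > 1, v₋ > 0, and p(v) = v^{-γ}. There exist constants δ₀ > 0 and C > 0 such that for every v₊ > v₋ with 0 < δ := p(v₋) − p(v₊) ≤ δ₀ and every v with v₋ < v < v₊, one has | (v − v₋)/(p(v) − p(v₋)) + (v − v₊)/(p(v₊) − p(v)) + (1/2)·(p''(v₋)/p'(v₋)²)·(v₋ − v₊) | ≤ C δ². -/

import Mathlib

open Real Set

-- (helpers assumed compiled; test with import of file not possible, so concat later)

/-- MVT Lipschitz bound from a derivative bound on `Icc`. -/
lemma lipIcc {f f' : ℝ → ℝ} {lo hi K : ℝ}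
    (hd : ∀ x ∈ Icc lo hi, HasDerivAt f (f' x) x)
    (hb : ∀ x ∈ Icc lo hi, |f' x| ≤ K) :
    ∀ a ∈ Icc lo hi, ∀ b ∈ Icc lo hi, |f a - f b| ≤ K * |a - b| := by
  intro a ha b hb'
  have := Convex.norm_image_sub_le_of_norm_hasDerivWithin_le
    (f := f) (f' := f') (s := Icc lo hi)
    (fun x hx => (hd x hx).hasDerivWithinAt)
    (fun x hx => by simpa using hb x hx) (convex_Icc lo hi) hb' ha
  simpa [Real.norm_eq_abs] using this

lemma star (β lo hi : ℝ) (hβ : 0 < β) (hlo : 0 < lo) (hlh : lo ≤ hi) :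
    ∀ a ∈ Icc lo hi, ∀ b ∈ Icc lo hi,
      |a ^ (-β) - b ^ (-β) - (-β * hi ^ (-β - 1)) * (a - b)
          - β * (β + 1) * hi ^ (-β - 2) / 2 * ((a - hi) ^ 2 - (b - hi) ^ 2)|
        ≤ β * (β + 1) * (β + 2) * lo ^ (-β - 3) * (hi - lo) ^ 2 * |a - b| := by
  have hhi : 0 < hi := lt_of_lt_of_le hlo hlh
  set M : ℝ := β * (β + 1) * (β + 2) * lo ^ (-β - 3) with hM
  have hpos : ∀ x ∈ Icc lo hi, 0 < x := fun x hx => lt_of_lt_of_le hlo hx.1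
  -- step 1: f₂ x = β(β+1) x^(-β-2) is M-Lipschitz on Icc
  set f₂ : ℝ → ℝ := fun x => β * (β + 1) * x ^ (-β - 2) with hf₂
  have hd₂ : ∀ x ∈ Icc lo hi,
      HasDerivAt f₂ (β * (β + 1) * ((-β - 2) * x ^ (-β - 2 - 1))) x := by
    intro x hx
    exact (Real.hasDerivAt_rpow_const (Or.inl (hpos x hx).ne')).const_mul _
  have hb₂ : ∀ x ∈ Icc lo hi, |β * (β + 1) * ((-β - 2) * x ^ (-β - 2 - 1))| ≤ M := by
    intro x hx
    have hx0 := hpos x hx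
    have h1 : x ^ (-β - 2 - 1) ≤ lo ^ (-β - 3) := by
      have : (-β - 2 - 1 : ℝ) = -β - 3 := by ring
      rw [this]
      exact Real.rpow_le_rpow_of_nonpos hlo hx.1 (by nlinarith)
    have h2 : (0:ℝ) ≤ x ^ (-β - 2 - 1) := (Real.rpow_pos_of_pos hx0 _).le
    have hc : (0:ℝ) < β * (β + 1) * (β + 2) := by positivity
    have : |β * (β + 1) * ((-β - 2) * x ^ (-β - 2 - 1))|
        = β * (β + 1) * (β + 2) * x ^ (-β - 2 - 1) := by
      rw [abs_of_nonpos (by nlinarith [mul_nonneg hc.le h2])]; ring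
    rw [this, hM]
    nlinarith [mul_le_mul_of_nonneg_left h1 hc.le]
  have lip₂ := lipIcc hd₂ hb₂
  -- step 2: φ x = -β x^(-β-1) - f₂ hi * x
  set φ : ℝ → ℝ := fun x => -β * x ^ (-β - 1) - f₂ hi * x with hφ
  have hd₁ : ∀ x ∈ Icc lo hi, HasDerivAt φ (f₂ x - f₂ hi) x := by
    intro x hx
    have h1 : HasDerivAt (fun x : ℝ => x ^ (-β - 1)) ((-β - 1) * x ^ (-β - 1 - 1)) x :=
      Real.hasDerivAt_rpow_const (Or.inl (hpos x hx).ne')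
    have h2 := ((h1.const_mul (-β)).fun_sub ((hasDerivAt_id x).const_mul (f₂ hi)))
    refine h2.congr_deriv ?_
    have : (-β - 1 - 1 : ℝ) = -β - 2 := by ring
    simp only [hf₂, this, mul_one]
    ring
  have hb₁ : ∀ x ∈ Icc lo hi, |f₂ x - f₂ hi| ≤ M * (hi - lo) := by
    intro x hx
    calc |f₂ x - f₂ hi| ≤ M * |x - hi| :=
          lip₂ x hx hi (right_mem_Icc.2 hlh)
      _ ≤ M * (hi - lo) := by
          have hM0 : 0 ≤ M := by positivity
          have : |x - hi| ≤ hi - lo := by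
            rw [abs_sub_comm, abs_of_nonneg (by linarith [hx.2])]
            linarith [hx.1]
          nlinarith
  have lip₁ := lipIcc hd₁ hb₁
  -- step 3: ψ x = x^(-β) - A x - B/2 (x-hi)^2
  set A : ℝ := -β * hi ^ (-β - 1) with hA
  set B : ℝ := β * (β + 1) * hi ^ (-β - 2) with hB
  set ψ : ℝ → ℝ := fun x => x ^ (-β) - A * x - B / 2 * (x - hi) ^ 2 with hψ
  have hd₀ : ∀ x ∈ Icc lo hi, HasDerivAt ψ (φ x - φ hi) x := by
    intro x hx
    have h1 : HasDerivAt (fun x : ℝ => x ^ (-β)) ((-β) * x ^ (-β - 1)) x :=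
      Real.hasDerivAt_rpow_const (Or.inl (hpos x hx).ne')
    have h2 : HasDerivAt (fun x : ℝ => A * x) A x := by
      simpa using (hasDerivAt_id x).const_mul A
    have h3 : HasDerivAt (fun x : ℝ => B / 2 * (x - hi) ^ 2) (B / 2 * (2 * (x - hi))) x := by
      have : HasDerivAt (fun x : ℝ => (x - hi) ^ 2) (2 * (x - hi)) x := by
        simpa using (((hasDerivAt_id x).sub_const hi).fun_pow 2)
      exact this.const_mul _
    refine ((h1.fun_sub h2).fun_sub h3).congr_deriv ?_
    simp only [hφ, hf₂, hA, hB]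
    ring
  have hb₀ : ∀ x ∈ Icc lo hi, |φ x - φ hi| ≤ M * (hi - lo) * (hi - lo) := by
    intro x hx
    calc |φ x - φ hi| ≤ M * (hi - lo) * |x - hi| :=
          lip₁ x hx hi (right_mem_Icc.2 hlh)
      _ ≤ M * (hi - lo) * (hi - lo) := by
          have hM0 : 0 ≤ M * (hi - lo) := by
            have : 0 ≤ M := by positivity
            nlinarith
          have : |x - hi| ≤ hi - lo := by
            rw [abs_sub_comm, abs_of_nonneg (by linarith [hx.2])]
            linarith [hx.1]
          nlinarith
  have lip₀ := lipIcc hd₀ hb₀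
  intro a ha b hb'
  have := lip₀ a ha b hb'
  have heq : ψ a - ψ b = a ^ (-β) - b ^ (-β) - (-β * hi ^ (-β - 1)) * (a - b)
      - β * (β + 1) * hi ^ (-β - 2) / 2 * ((a - hi) ^ 2 - (b - hi) ^ 2) := by
    simp only [hψ, hA, hB]; ring
  rw [heq] at this
  calc _ ≤ M * (hi - lo) * (hi - lo) * |a - b| := this
    _ = M * (hi - lo) ^ 2 * |a - b| := by ring


set_option maxHeartbeats 4000000 in
/-- Estimate on the inverse of the pressure: for `γ > 1`, `v₋ > 0`,
`p(v) = v^(-γ)` (so `p'(v) = -γ v^(-γ-1)`, `p''(v) = γ(γ+1) v^(-γ-2)`), there are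
`δ₀, C > 0` such that for all `v₊ > v₋` with `0 < δ := p(v₋) - p(v₊) ≤ δ₀` and all
`v₋ < v < v₊`:
`|(v-v₋)/(p(v)-p(v₋)) + (v-v₊)/(p(v₊)-p(v)) + (1/2)(p''(v₋)/p'(v₋)²)(v₋-v₊)| ≤ Cδ²`. -/
theorem stmt_6 (γ vminus : ℝ) (hγ : 1 < γ) (hv : 0 < vminus) :
    ∃ δ₀ > 0, ∃ C > 0, ∀ vplus : ℝ, vminus < vplus →
      0 < vminus ^ (-γ) - vplus ^ (-γ) →
      vminus ^ (-γ) - vplus ^ (-γ) ≤ δ₀ →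
      ∀ v : ℝ, vminus < v → v < vplus →
        |(v - vminus) / (v ^ (-γ) - vminus ^ (-γ))
            + (v - vplus) / (vplus ^ (-γ) - v ^ (-γ))
            + 1 / 2 * (γ * (γ + 1) * vminus ^ (-γ - 2)
                / (-(γ * vminus ^ (-γ - 1))) ^ 2) * (vminus - vplus)|
          ≤ C * (vminus ^ (-γ) - vplus ^ (-γ)) ^ 2 := by
  have hγ0 : 0 < γ := by linarith
  have hγne : γ ≠ 0 := ne_of_gt hγ0
  set β : ℝ := 1 / γ with hβdef
  have hβ : 0 < β := by positivity
  set wm : ℝ := vminus ^ (-γ) with hwm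
  have hwm0 : 0 < wm := Real.rpow_pos_of_pos hv _
  set A : ℝ := -β * wm ^ (-β - 1) with hA
  set B : ℝ := β * (β + 1) * wm ^ (-β - 2) with hB
  set M₀ : ℝ := β * (β + 1) * (β + 2) * (wm / 2) ^ (-β - 3) with hM₀
  set Tc : ℝ := 1 / 2 * (γ * (γ + 1) * vminus ^ (-γ - 2)
      / (-(γ * vminus ^ (-γ - 1))) ^ 2) with hTc
  clear_value β wm A B M₀ Tc
  have hM₀0 : 0 < M₀ := by
    rw [hM₀]
    have : (0:ℝ) < (wm / 2) ^ (-β - 3) := Real.rpow_pos_of_pos (by linarith) _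
    positivity
  have hAne : A ≠ 0 := by
    rw [hA]
    have : (0:ℝ) < wm ^ (-β - 1) := Real.rpow_pos_of_pos hwm0 _
    nlinarith
  -- value of Tc
  have hTcval : Tc = -B / (2 * A) := by
    have e1 : wm ^ (-β - 1) = vminus ^ (γ + 1) := by
      rw [hwm, ← Real.rpow_mul hv.le]
      congr 1
      rw [hβdef]; field_simp; ring
    have e2 : wm ^ (-β - 2) = vminus ^ (2 * γ + 1) := by
      rw [hwm, ← Real.rpow_mul hv.le]
      congr 1
      rw [hβdef]; field_simp; ring
    have e3 : vminus ^ (2 * γ + 1) = vminus ^ γ * vminus ^ (γ + 1) := by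
      rw [← Real.rpow_add hv]; congr 1; ring
    have e4 : vminus ^ (-γ - 2)
        = vminus ^ γ * (vminus ^ (-γ - 1) * vminus ^ (-γ - 1)) := by
      rw [← Real.rpow_add hv, ← Real.rpow_add hv]; congr 1; ring
    have hY : vminus ^ (-γ - 1) ≠ 0 := (Real.rpow_pos_of_pos hv _).ne'
    have hZ : vminus ^ (γ + 1) ≠ 0 := (Real.rpow_pos_of_pos hv _).ne'
    rw [hTc, hA, hB, e1, e2, e3, e4, hβdef]
    field_simp
    ring
  refine ⟨wm / 2, by linarith, 2 * M₀ + |Tc| * M₀ * (wm / 2) + |B ^ 2 / (4 * A)| + 1, ?_, ?_⟩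
  · have h1 : 0 ≤ |Tc| * M₀ * (wm / 2) := by
      apply mul_nonneg (mul_nonneg (abs_nonneg _) hM₀0.le); linarith
    have h2 : 0 ≤ |B ^ 2 / (4 * A)| := abs_nonneg _
    linarith
  intro vplus hvv hδ0 hδ₀ v hv1 hv2
  have hv0 : 0 < v := lt_trans hv hv1
  have hvp0 : 0 < vplus := lt_trans hv0 hv2
  set wp : ℝ := vplus ^ (-γ) with hwp
  set wv : ℝ := v ^ (-γ) with hwv
  have hwp0 : 0 < wp := Real.rpow_pos_of_pos hvp0 _
  have hord1 : wv < wm := by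
    rw [hwv, hwm]; exact Real.rpow_lt_rpow_of_neg hv hv1 (by linarith)
  have hord2 : wp < wv := by
    rw [hwv, hwp]; exact Real.rpow_lt_rpow_of_neg hv0 hv2 (by linarith)
  set δ : ℝ := wm - wp with hδdef
  clear_value wp wv δ
  have hδpos : 0 < δ := hδ0
  have hδle : δ ≤ wm / 2 := hδ₀
  have hwpge : wm / 2 ≤ wp := by rw [hδdef] at hδle; linarith
  have hle : wp ≤ wm := by linarith
  -- inversion
  have hinv : ∀ u : ℝ, 0 < u → (u ^ (-γ)) ^ (-β) = u := by
    intro u hu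
    rw [← Real.rpow_mul hu.le]
    have : -γ * -β = 1 := by rw [hβdef]; field_simp
    rw [this, Real.rpow_one]
  have hgv : wv ^ (-β) = v := by rw [hwv]; exact hinv v hv0
  have hgm : wm ^ (-β) = vminus := by rw [hwm]; exact hinv vminus hv
  have hgp : wp ^ (-β) = vplus := by rw [hwp]; exact hinv vplus hvp0
  -- bound on the constant from `star`
  have hMle : β * (β + 1) * (β + 2) * wp ^ (-β - 3) ≤ M₀ := by
    rw [hM₀]
    have h1 : wp ^ (-β - 3) ≤ (wm / 2) ^ (-β - 3) :=
      Real.rpow_le_rpow_of_nonpos (by linarith) hwpge (by linarith)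
    have h2 : (0:ℝ) ≤ β * (β + 1) * (β + 2) := by positivity
    exact mul_le_mul_of_nonneg_left h1 h2
  have hmemv : wv ∈ Icc wp wm := ⟨hord2.le, hord1.le⟩
  have hmemm : wm ∈ Icc wp wm := ⟨hle, le_refl _⟩
  have hmemp : wp ∈ Icc wp wm := ⟨le_refl _, hle⟩
  have S := star β wp wm hβ hwp0 hle
  have hs1 := S wv hmemv wm hmemm
  have hs2 := S wv hmemv wp hmemp
  have hs3 := S wm hmemm wp hmemp
  rw [hgv, hgm, ← hA, ← hB] at hs1
  rw [hgv, hgp, ← hA, ← hB] at hs2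
  rw [hgm, hgp, ← hA, ← hB] at hs3
  -- shrink constants to M₀ and δ
  have hshrink : ∀ num d : ℝ,
      |num| ≤ β * (β + 1) * (β + 2) * wp ^ (-β - 3) * (wm - wp) ^ 2 * |d| →
      |num| ≤ M₀ * δ ^ 2 * |d| := by
    intro num d h
    refine h.trans ?_
    have : (0:ℝ) ≤ (wm - wp) ^ 2 * |d| := by positivity
    rw [hδdef]
    exact mul_le_mul_of_nonneg_right
      (mul_le_mul_of_nonneg_right hMle (sq_nonneg _)) (abs_nonneg d)
  have hs1' := hshrink _ _ hs1
  have hs2' := hshrink _ _ hs2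
  have hs3' := hshrink _ _ hs3
  have hne1 : wv - wm ≠ 0 := by intro h; linarith
  have hne2 : wp - wv ≠ 0 := by intro h; linarith
  -- division bounds
  have habs : ∀ e d num : ℝ, d ≠ 0 → e * d = num → |num| ≤ M₀ * δ ^ 2 * |d| →
      |e| ≤ M₀ * δ ^ 2 := by
    intro e d num hd he hn
    have h1 : |e| * |d| ≤ M₀ * δ ^ 2 * |d| := by rw [← abs_mul, he]; exact hn
    exact le_of_mul_le_mul_right h1 (abs_pos.2 hd)
  set t1 : ℝ := (v - vminus) / (wv - wm) with ht1
  set t2 : ℝ := (v - vplus) / (wp - wv) with ht2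
  clear_value t1 t2
  have he1 : |t1 - A - B / 2 * (wv - wm)| ≤ M₀ * δ ^ 2 := by
    refine habs _ (wv - wm) _ hne1 ?_ hs1'
    rw [ht1]; field_simp; ring
  have he2 : |t2 + A + B / 2 * ((wv - wm) + (wp - wm))| ≤ M₀ * δ ^ 2 := by
    rw [abs_sub_comm wv wp] at hs2'
    refine habs _ (wp - wv) _ hne2 ?_ hs2'
    rw [ht2]; field_simp; ring
  have he3 : |vminus - vplus - A * δ + B / 2 * δ ^ 2| ≤ M₀ * δ ^ 2 * δ := by
    have heq : vminus - vplus - A * δ + B / 2 * δ ^ 2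
        = vminus - vplus - A * (wm - wp) - B / 2 * ((wm - wm) ^ 2 - (wp - wm) ^ 2) := by
      rw [hδdef]; ring
    rw [heq]
    refine hs3'.trans ?_
    have habsδ : |wm - wp| = δ := by rw [← hδdef]; exact abs_of_pos hδpos
    rw [habsδ]
  -- the algebraic identity
  set e₁ : ℝ := t1 - A - B / 2 * (wv - wm) with hee1
  set e₂ : ℝ := t2 + A + B / 2 * ((wv - wm) + (wp - wm)) with hee2
  set e₃ : ℝ := vminus - vplus - A * δ + B / 2 * δ ^ 2 with hee3
  have hid : t1 + t2 + Tc * (vminus - vplus)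
      = e₁ + e₂ + Tc * e₃ + B ^ 2 / (4 * A) * δ ^ 2 := by
    rw [hee1, hee2, hee3, hTcval, hδdef]
    field_simp
    ring
  clear_value e₁ e₂ e₃
  rw [hid]
  have tri : |e₁ + e₂ + Tc * e₃ + B ^ 2 / (4 * A) * δ ^ 2|
      ≤ |e₁| + |e₂| + |Tc| * |e₃| + |B ^ 2 / (4 * A)| * δ ^ 2 := by
    have t0 : |e₁ + e₂ + Tc * e₃ + B ^ 2 / (4 * A) * δ ^ 2|
        ≤ |e₁| + |e₂| + |Tc * e₃| + |B ^ 2 / (4 * A) * δ ^ 2| :=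
      (abs_add_le _ _).trans (add_le_add_left
        ((abs_add_le _ _).trans (add_le_add_left (abs_add_le _ _) _)) _)
    refine t0.trans (le_of_eq ?_)
    rw [abs_mul, abs_mul, abs_of_nonneg (sq_nonneg δ)]
  refine tri.trans ?_
  have h3 : |Tc| * |e₃| ≤ |Tc| * M₀ * (wm / 2) * δ ^ 2 := by
    have h4 : |e₃| ≤ M₀ * (wm / 2) * δ ^ 2 := by
      refine he3.trans ?_
      have h5 : M₀ * δ ^ 2 * δ ≤ M₀ * δ ^ 2 * (wm / 2) :=
        mul_le_mul_of_nonneg_left hδle (by positivity)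
      have h6 : M₀ * δ ^ 2 * (wm / 2) = M₀ * (wm / 2) * δ ^ 2 := by ring
      linarith
    calc |Tc| * |e₃| ≤ |Tc| * (M₀ * (wm / 2) * δ ^ 2) :=
          mul_le_mul_of_nonneg_left h4 (abs_nonneg _)
      _ = |Tc| * M₀ * (wm / 2) * δ ^ 2 := by ring
  have expand : (2 * M₀ + |Tc| * M₀ * (wm / 2) + |B ^ 2 / (4 * A)| + 1) * δ ^ 2
      = M₀ * δ ^ 2 + M₀ * δ ^ 2 + |Tc| * M₀ * (wm / 2) * δ ^ 2
        + |B ^ 2 / (4 * A)| * δ ^ 2 + δ ^ 2 := by ring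
  rw [expand]
  linarith [he1, he2, h3, sq_nonneg δ]
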